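/- arXiv:1606.00552 — 5 statements merged into one kernel-verified Lean document; each statement's English description precedes it below -/
import Mathlib

section
/- Let r ≥ 3, 𝔞 = (x_1^2,...,x_r^2), and let Ann(g) be the apolarity annihilator of the elementary symmetric polynomial g of degree r-2. Then the colon ideal J = (𝔞 : Ann(g)) equals (x_1^2, x_2^2, ..., x_r^2, (x_1 + x_2 + ··· + x_r)^2). -/
open MvPolynomial

/-- The differential operator `∂^m` (apply `∂/∂X i` exactly `m i` times for each `i`). -/
noncomputable def pderivMulti {K : Type*} [CommSemiring K] {r : ℕ} (m : Fin r → ℕ)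
    (g : MvPolynomial (Fin r) K) : MvPolynomial (Fin r) K :=
  (List.finRange r).foldr (fun i p => (⇑(pderiv i))^[m i] p) g

/-- The apolarity action `f ∘ g`. -/
noncomputable def apol {K : Type*} [CommSemiring K] {r : ℕ}
    (f g : MvPolynomial (Fin r) K) : MvPolynomial (Fin r) K :=
  ∑ m ∈ f.support, f.coeff m • pderivMulti (⇑m) g

/-!
Let `F = x₁ ⋯ x_r = e_r`, `G = e_{r-2}` and `L = x₁ + ⋯ + x_r`. The annihilator of `F` is
`𝔞 = (x₁², …, x_r²)`, and `L` lowers elementary symmetric polynomials, `L ∘ e_{k+1} = (r - k) e_k`,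
so `L² ∘ F = 2 G`.

If `ℓ ∘ F = c G` with `c ≠ 0`, then `(Ann F : Ann G) = Ann F + (ℓ)`. Indeed, for `h` in the colon
ideal every `Q ∈ Ann G` kills `h ∘ F`, because `Q ∘ (h ∘ F) = (h Q) ∘ F`. The pairing
`⟨f, g⟩ = (f ∘ g)(0)` is perfect on polynomials of bounded degree, and the derivatives `θ ∘ G` form
the orthogonal of `Ann G` there (Macaulay duality), so `h ∘ F = θ ∘ G = (c⁻¹ θ ℓ) ∘ F`, i.e.
`h - c⁻¹ θ ℓ ∈ Ann F`.
-/

open Finset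

theorem Finset.sum_powersetCard_succ_sum_erase {σ M : Type*} [Fintype σ] [DecidableEq σ]
    [AddCommMonoid M] (k : ℕ) (f : Finset σ → M) :
    ∑ T ∈ powersetCard (k + 1) univ, ∑ i ∈ T, f (T.erase i) =
      (Fintype.card σ - k) • ∑ S ∈ powersetCard k univ, f S :=
  calc ∑ T ∈ powersetCard (k + 1) univ, ∑ i ∈ T, f (T.erase i)
      = ∑ S ∈ powersetCard k univ, ∑ _i ∈ univ \ S, f S := by
        rw [sum_sigma', sum_sigma']
        refine sum_nbij' (fun p => ⟨p.1.erase p.2, p.2⟩) (fun p => ⟨insert p.2 p.1, p.2⟩)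
          ?_ ?_ ?_ ?_ fun _ _ => rfl
        all_goals
          simp only [mem_sigma, mem_powersetCard, subset_univ, true_and, mem_sdiff, mem_univ]
          rintro ⟨S, i⟩ ⟨hS, hi⟩
        · exact ⟨by rw [card_erase_of_mem hi, hS, Nat.add_sub_cancel], notMem_erase i S⟩
        · exact ⟨by rw [card_insert_of_notMem hi, hS], mem_insert_self i S⟩
        · rw [insert_erase hi]
        · rw [erase_insert hi]
    _ = (Fintype.card σ - k) • ∑ S ∈ powersetCard k univ, f S := by
        rw [smul_sum]
        refine sum_congr rfl fun S hS => ?_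
        rw [sum_const, card_univ_sdiff, (mem_powersetCard.mp hS).2]

namespace MvPolynomial

variable {σ R : Type*} [CommSemiring R]

theorem pderiv_prod_X [DecidableEq σ] (T : Finset σ) (i : σ) :
    pderiv i (∏ t ∈ T, X t : MvPolynomial σ R) = if i ∈ T then ∏ t ∈ T.erase i, X t else 0 := by
  have h_notMem : ∀ T : Finset σ, i ∉ T → pderiv i (∏ t ∈ T, X t : MvPolynomial σ R) = 0 := by
    intro T
    induction T using Finset.induction_on with
    | empty => simp
    | insert j T hj ih =>
      intro hi
      rw [mem_insert, not_or] at hi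
      rw [prod_insert hj, pderiv_mul, pderiv_X_of_ne (Ne.symm hi.1), ih hi.2, zero_mul, mul_zero,
        add_zero]
  split_ifs with hi
  · rw [← mul_prod_erase T _ hi, pderiv_mul, pderiv_X_self, h_notMem _ (notMem_erase i T),
      one_mul, mul_zero, add_zero]
  · exact h_notMem T hi

theorem sum_pderiv_esymm_succ [Fintype σ] (k : ℕ) :
    ∑ i, pderiv i (esymm σ R (k + 1)) = (Fintype.card σ - k) • esymm σ R k := by
  classical
  simp only [esymm, map_sum, pderiv_prod_X]
  rw [sum_comm, ← sum_powersetCard_succ_sum_erase]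
  exact sum_congr rfl fun T _ => by rw [sum_ite_mem, univ_inter]

theorem esymm_card [Fintype σ] : esymm σ R (Fintype.card σ) = ∏ i, X i := by
  rw [esymm, ← card_univ, powersetCard_self, sum_singleton]

end MvPolynomial

section Apolarity

variable {R : Type*} [CommSemiring R] {r : ℕ}

noncomputable def pderivMultiₗ (m : Fin r → ℕ) : Module.End R (MvPolynomial (Fin r) R) :=
  (List.finRange r).foldr (fun i φ => (pderiv i).toLinearMap ^ m i * φ) 1

theorem coe_pderivMultiₗ (m : Fin r → ℕ) : ⇑(pderivMultiₗ (R := R) m) = pderivMulti m := by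
  funext g
  unfold pderivMultiₗ pderivMulti
  induction List.finRange r with
  | nil => rfl
  | cons i t ih =>
    rw [List.foldr_cons, List.foldr_cons, Module.End.mul_apply, ih, Module.End.coe_pow]
    rfl

theorem pderivMulti_add (m : Fin r → ℕ) (p q : MvPolynomial (Fin r) R) :
    pderivMulti m (p + q) = pderivMulti m p + pderivMulti m q := by
  simp only [← coe_pderivMultiₗ, map_add]

theorem pderivMulti_smul (m : Fin r → ℕ) (c : R) (p : MvPolynomial (Fin r) R) :
    pderivMulti m (c • p) = c • pderivMulti m p := by
  simp only [← coe_pderivMultiₗ, map_smul]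

noncomputable def apolₗ :
    MvPolynomial (Fin r) R →ₗ[R] MvPolynomial (Fin r) R →ₗ[R] MvPolynomial (Fin r) R :=
  Finsupp.linearCombination R (fun m : Fin r →₀ ℕ => pderivMultiₗ ⇑m) ∘ₗ
    (AddMonoidAlgebra.coeffLinearEquiv R).toLinearMap

theorem apolₗ_apply (f g : MvPolynomial (Fin r) R) : apolₗ f g = apol f g := by
  simp only [apolₗ, LinearMap.comp_apply, Finsupp.linearCombination_apply, Finsupp.sum,
    LinearMap.coe_sum, Finset.sum_apply, LinearMap.smul_apply, coe_pderivMultiₗ]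
  rfl

theorem apol_add_left (f₁ f₂ g : MvPolynomial (Fin r) R) :
    apol (f₁ + f₂) g = apol f₁ g + apol f₂ g := by
  simp only [← apolₗ_apply, map_add, LinearMap.add_apply]

theorem apol_smul_left (c : R) (f g : MvPolynomial (Fin r) R) :
    apol (c • f) g = c • apol f g := by
  simp only [← apolₗ_apply, map_smul, LinearMap.smul_apply]

theorem apol_sum_left {ι : Type*} (s : Finset ι) (f : ι → MvPolynomial (Fin r) R)
    (g : MvPolynomial (Fin r) R) : apol (∑ i ∈ s, f i) g = ∑ i ∈ s, apol (f i) g := by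
  simp only [← apolₗ_apply, map_sum, LinearMap.coe_sum, Finset.sum_apply]

theorem apol_zero_left (g : MvPolynomial (Fin r) R) : apol 0 g = 0 := by
  simp only [← apolₗ_apply, map_zero, LinearMap.zero_apply]

theorem apol_add_right (f g₁ g₂ : MvPolynomial (Fin r) R) :
    apol f (g₁ + g₂) = apol f g₁ + apol f g₂ := by
  simp only [← apolₗ_apply, map_add]

theorem apol_smul_right (c : R) (f g : MvPolynomial (Fin r) R) :
    apol f (c • g) = c • apol f g := by
  simp only [← apolₗ_apply, map_smul]

theorem apol_zero_right (f : MvPolynomial (Fin r) R) : apol f 0 = 0 := by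
  simp only [← apolₗ_apply, map_zero]

theorem iterate_pderiv_monomial (i : Fin r) (k : ℕ) (e : Fin r →₀ ℕ) (c : R) :
    (⇑(pderiv i))^[k] (monomial e c) =
      monomial (e - Finsupp.single i k) ((e i).descFactorial k * c) := by
  induction k with
  | zero => simp
  | succ k ih =>
    rw [Function.iterate_succ_apply', ih, pderiv_monomial, tsub_tsub, ← Finsupp.single_add,
      Finsupp.tsub_apply, Finsupp.single_eq_same, Nat.descFactorial_succ]
    congr 1
    push_cast
    ring

theorem foldr_iterate_pderiv_monomial (m : Fin r → ℕ) {l : List (Fin r)} (hl : l.Nodup)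
    (n : Fin r →₀ ℕ) (c : R) :
    l.foldr (fun i p => (⇑(pderiv i))^[m i] p) (monomial n c) =
      monomial (n - (l.map fun i => Finsupp.single i (m i)).sum)
        ((l.map fun i => (n i).descFactorial (m i)).prod * c) := by
  induction l with
  | nil => simp
  | cons i t ih =>
    obtain ⟨hi, ht⟩ := List.nodup_cons.mp hl
    have h_apply : (t.map fun j => Finsupp.single j (m j)).sum i = 0 := by
      rw [← Finsupp.applyAddHom_apply, map_list_sum, List.map_map]
      exact List.sum_eq_zero fun x hx => by
        obtain ⟨j, hj, rfl⟩ := List.mem_map.mp hx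
        exact Finsupp.single_eq_of_ne (by rintro rfl; exact hi hj)
    rw [List.foldr_cons, ih ht, iterate_pderiv_monomial, Finsupp.tsub_apply, h_apply, tsub_zero,
      tsub_tsub, List.map_cons, List.map_cons, List.sum_cons, List.prod_cons, add_comm,
      Nat.cast_mul, mul_assoc]

theorem pderivMulti_monomial (m n : Fin r →₀ ℕ) (c : R) :
    pderivMulti ⇑m (monomial n c) =
      monomial (n - m) ((∏ i, (n i).descFactorial (m i) : ℕ) * c) := by
  rw [pderivMulti, foldr_iterate_pderiv_monomial _ (List.nodup_finRange r), ← Fin.prod_univ_def,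
    ← Fin.sum_univ_def, Finsupp.univ_sum_single]

theorem pderivMulti_add_exponent (a b : Fin r →₀ ℕ) (g : MvPolynomial (Fin r) R) :
    pderivMulti ⇑(a + b) g = pderivMulti ⇑a (pderivMulti ⇑b g) := by
  induction g using MvPolynomial.induction_on' with
  | add p q hp hq => rw [pderivMulti_add, pderivMulti_add, pderivMulti_add, hp, hq]
  | monomial n c =>
    rw [pderivMulti_monomial, pderivMulti_monomial, pderivMulti_monomial, ← mul_assoc,
      ← Nat.cast_mul, ← prod_mul_distrib, add_comm a, ← tsub_tsub]
    congr 3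
    refine prod_congr rfl fun i _ => ?_
    rw [Finsupp.tsub_apply, Finsupp.add_apply, ← Nat.descFactorial_mul_descFactorial
      (Nat.le_add_right (b i) (a i)), Nat.add_sub_cancel_left]

theorem apol_monomial_left (n : Fin r →₀ ℕ) (c : R) (g : MvPolynomial (Fin r) R) :
    apol (monomial n c) g = c • pderivMulti ⇑n g := by
  classical
  rcases eq_or_ne c 0 with rfl | hc
  · simp [apol]
  · rw [apol, support_monomial, if_neg hc, sum_singleton, coeff_monomial, if_pos rfl]

theorem apol_mul (f g P : MvPolynomial (Fin r) R) : apol (f * g) P = apol f (apol g P) := by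
  induction f using MvPolynomial.induction_on' with
  | add f₁ f₂ h₁ h₂ => rw [add_mul, apol_add_left, apol_add_left, h₁, h₂]
  | monomial a c =>
    induction g using MvPolynomial.induction_on' with
    | add g₁ g₂ h₁ h₂ => rw [mul_add, apol_add_left, apol_add_left, h₁, h₂, apol_add_right]
    | monomial b d =>
      rw [monomial_mul, apol_monomial_left, apol_monomial_left, apol_monomial_left,
        pderivMulti_add_exponent, pderivMulti_smul, smul_smul]

theorem apol_X (i : Fin r) (g : MvPolynomial (Fin r) R) : apol (X i) g = pderiv i g := by
  induction g using MvPolynomial.induction_on' with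
  | add p q hp hq => rw [apol_add_right, hp, hq, map_add]
  | monomial n c =>
    rw [X, apol_monomial_left, one_smul, pderivMulti_monomial, pderiv_monomial, mul_comm,
      Fintype.prod_eq_single i fun j hj => by
        rw [Finsupp.single_eq_of_ne hj, Nat.descFactorial_zero],
      Finsupp.single_eq_same, Nat.descFactorial_one]

theorem apol_sum_X (g : MvPolynomial (Fin r) R) : apol (∑ i, X i) g = ∑ i, pderiv i g := by
  simp only [apol_sum_left, apol_X]

theorem coeff_zero_pderivMulti (m : Fin r →₀ ℕ) (P : MvPolynomial (Fin r) R) :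
    coeff 0 (pderivMulti ⇑m P) = (∏ i, (m i).factorial : ℕ) * coeff m P := by
  induction P using MvPolynomial.induction_on' with
  | add p q hp hq => rw [pderivMulti_add, coeff_add, coeff_add, hp, hq, mul_add]
  | monomial n c =>
    rw [pderivMulti_monomial, coeff_monomial, coeff_monomial]
    by_cases hnm : n = m
    · subst hnm
      simp [Nat.descFactorial_self]
    · rw [if_neg hnm, mul_zero, ite_eq_right_iff]
      intro hle
      obtain ⟨i, hi⟩ : ∃ i, n i < m i := by
        by_contra! h
        exact hnm (le_antisymm (tsub_eq_zero_iff_le.mp hle) h)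
      rw [prod_eq_zero (mem_univ i) (Nat.descFactorial_eq_zero_iff_lt.mpr hi), Nat.cast_zero,
        zero_mul]

theorem coeff_zero_apol_monomial_left (n : Fin r →₀ ℕ) (c : R) (P : MvPolynomial (Fin r) R) :
    coeff 0 (apol (monomial n c) P) = (∏ i, (n i).factorial : ℕ) * c * coeff n P := by
  rw [apol_monomial_left, coeff_smul, coeff_zero_pderivMulti, smul_eq_mul, mul_left_comm,
    ← mul_assoc]

theorem coeff_zero_apol_comm (f P : MvPolynomial (Fin r) R) :
    coeff 0 (apol f P) = coeff 0 (apol P f) := by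
  induction f using MvPolynomial.induction_on' generalizing P with
  | add f₁ f₂ h₁ h₂ => rw [apol_add_left, apol_add_right, coeff_add, coeff_add, h₁, h₂]
  | monomial n c =>
    induction P using MvPolynomial.induction_on' with
    | add P₁ P₂ h₁ h₂ => rw [apol_add_left, apol_add_right, coeff_add, coeff_add, h₁, h₂]
    | monomial m d =>
      rw [coeff_zero_apol_monomial_left, coeff_zero_apol_monomial_left, coeff_monomial,
        coeff_monomial]
      by_cases hmn : m = n
      · subst hmn
        rw [if_pos rfl, if_pos rfl]
        ring
      · rw [if_neg hmn, if_neg (Ne.symm hmn), mul_zero, mul_zero]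

theorem totalDegree_pderivMulti_le (m : Fin r →₀ ℕ) (P : MvPolynomial (Fin r) R) :
    (pderivMulti ⇑m P).totalDegree ≤ P.totalDegree := by
  conv_lhs => rw [P.as_sum, ← coe_pderivMultiₗ, map_sum]
  refine totalDegree_finsetSum_le fun n hn => ?_
  rw [coe_pderivMultiₗ, pderivMulti_monomial]
  exact (totalDegree_monomial_le _ _).trans
    ((Finsupp.degree_mono tsub_le_self).trans (le_totalDegree hn))

theorem totalDegree_apol_le (f P : MvPolynomial (Fin r) R) :
    (apol f P).totalDegree ≤ P.totalDegree :=
  totalDegree_finsetSum_le fun _ _ =>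
    (totalDegree_smul_le _ _).trans (totalDegree_pderivMulti_le _ _)

noncomputable def apolarPairing (N : ℕ) :
    LinearMap.BilinForm R (restrictTotalDegree (Fin r) R N) :=
  (apolₗ.compr₂ (lcoeff R 0)).compl₁₂ (restrictTotalDegree (Fin r) R N).subtype
    (restrictTotalDegree (Fin r) R N).subtype

theorem apolarPairing_apply (N : ℕ) (f g : restrictTotalDegree (Fin r) R N) :
    apolarPairing N f g = coeff 0 (apol f.1 g.1) := by
  simp [apolarPairing, apolₗ_apply]

theorem apolarPairing_isRefl (N : ℕ) : LinearMap.IsRefl (apolarPairing (R := R) (r := r) N) :=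
  fun f g h => by rwa [apolarPairing_apply, coeff_zero_apol_comm, ← apolarPairing_apply]

def apolarAnnihilator (g : MvPolynomial (Fin r) R) : Ideal (MvPolynomial (Fin r) R) where
  carrier := {f | apol f g = 0}
  add_mem' {f₁ f₂} (h₁ : apol f₁ g = 0) (h₂ : apol f₂ g = 0) :=
    show apol (f₁ + f₂) g = 0 by rw [apol_add_left, h₁, h₂, add_zero]
  zero_mem' := apol_zero_left g
  smul_mem' c f (hf : apol f g = 0) :=
    show apol (c * f) g = 0 by rw [apol_mul, hf, apol_zero_right]

theorem mem_apolarAnnihilator {f g : MvPolynomial (Fin r) R} :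
    f ∈ apolarAnnihilator g ↔ apol f g = 0 :=
  Iff.rfl

theorem span_setOf_apol_eq_zero (g : MvPolynomial (Fin r) R) :
    Ideal.span {f | apol f g = 0} = apolarAnnihilator g :=
  Ideal.span_eq (apolarAnnihilator g)

theorem prod_X_eq_monomial :
    (∏ i, X i : MvPolynomial (Fin r) R) = monomial (∑ i, Finsupp.single i 1) 1 := by
  rw [monomial_sum_one]
  rfl

theorem coeff_zero_apol_prod_X (f : MvPolynomial (Fin r) R) :
    coeff 0 (apol f (∏ i, X i)) = coeff (∑ i, Finsupp.single i 1) f := by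
  rw [coeff_zero_apol_comm, prod_X_eq_monomial, coeff_zero_apol_monomial_left]
  simp

theorem apolarAnnihilator_prod_X :
    apolarAnnihilator (∏ i, X i : MvPolynomial (Fin r) R) =
      Ideal.span (Set.range fun i => X i ^ 2) := by
  apply le_antisymm
  · intro q hq
    have h_range : (Set.range fun i => (X i ^ 2 : MvPolynomial (Fin r) R)) =
        (fun s => monomial s 1) '' Set.range fun i => Finsupp.single i 2 := by
      rw [← Set.range_comp]
      simp [Function.comp_def, X_pow_eq_monomial]
    rw [h_range, mem_ideal_span_monomial_image]
    intro m hm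
    by_contra! h_squarefree
    set u : Fin r →₀ ℕ := ∑ i, Finsupp.single i 1
    have hle : m ≤ u := fun i => by
      have := h_squarefree _ ⟨i, rfl⟩
      rw [Finsupp.single_le_iff, not_le] at this
      simp only [u, Finsupp.coe_finsetSum, Finset.sum_apply, Finsupp.univ_sum_single_apply']
      omega
    -- `coeff m q` is the pairing of `x^(u - m) q` with `F`, and `x^(u - m) q ∈ Ann F`.
    have h0 := congrArg (coeff 0) (apol_mul (monomial (u - m) 1) q (∏ i, X i))
    rw [mem_apolarAnnihilator.mp hq, apol_zero_right, coeff_zero, coeff_zero_apol_prod_X,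
      coeff_monomial_mul', if_pos tsub_le_self, one_mul, tsub_tsub_cancel_of_le hle] at h0
    exact mem_support_iff.mp hm h0
  · rw [Ideal.span_le]
    rintro _ ⟨i, rfl⟩
    dsimp only
    rw [SetLike.mem_coe, mem_apolarAnnihilator, pow_two, apol_mul, apol_X, apol_X, pderiv_prod_X,
      if_pos (mem_univ i), pderiv_prod_X, if_neg (notMem_erase i univ)]

theorem apol_sq_sum_X_prod_X (hr : 2 ≤ r) :
    apol ((∑ i, X i) ^ 2) (∏ i, X i : MvPolynomial (Fin r) R) = 2 • esymm (Fin r) R (r - 2) := by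
  obtain ⟨k, rfl⟩ := Nat.exists_eq_add_of_le' hr
  rw [pow_two, apol_mul, ← esymm_card, Fintype.card_fin, apol_sum_X (esymm _ _ _),
    sum_pderiv_esymm_succ, Fintype.card_fin, show k + 2 - (k + 1) = 1 by omega, one_smul,
    apol_sum_X, sum_pderiv_esymm_succ, Fintype.card_fin, show k + 2 - k = 2 by omega,
    Nat.add_sub_cancel]

end Apolarity

theorem apol_sub_left {R : Type*} [CommRing R] {r : ℕ} (f₁ f₂ g : MvPolynomial (Fin r) R) :
    apol (f₁ - f₂) g = apol f₁ g - apol f₂ g := by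
  simp only [← apolₗ_apply, map_sub, LinearMap.sub_apply]

section MacaulayDuality

variable {K : Type*} [Field K] [CharZero K] {r : ℕ}

theorem eq_zero_of_forall_coeff_zero_apol_monomial {P : MvPolynomial (Fin r) K}
    (h : ∀ n, coeff 0 (apol (monomial n 1) P) = 0) : P = 0 := by
  ext n
  have hn := h n
  rw [coeff_zero_apol_monomial_left, mul_one] at hn
  exact (mul_eq_zero.mp hn).resolve_left
    (Nat.cast_ne_zero.mpr (prod_ne_zero_iff.mpr fun i _ => (n i).factorial_ne_zero))

theorem apolarPairing_nondegenerate (N : ℕ) :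
    (apolarPairing (R := K) (r := r) N).Nondegenerate := by
  refine (apolarPairing_isRefl N).nondegenerate_iff_separatingLeft.mpr fun Q hQ => ?_
  rw [← Submodule.coe_eq_zero]
  refine eq_zero_of_forall_coeff_zero_apol_monomial fun n => ?_
  by_cases hn : n ∈ Q.1.support
  · have hmem : monomial n 1 ∈ restrictTotalDegree (Fin r) K N :=
      (mem_restrictTotalDegree _ _ _).mpr ((totalDegree_monomial_le _ _).trans
        ((le_totalDegree hn).trans ((mem_restrictTotalDegree _ _ _).mp Q.2)))
    rw [coeff_zero_apol_comm, ← apolarPairing_apply N Q ⟨_, hmem⟩]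
    exact hQ _
  · rw [coeff_zero_apol_monomial_left, notMem_support_iff.mp hn, mul_zero]

theorem exists_apol_eq_of_apolarAnnihilator_le {G P : MvPolynomial (Fin r) K}
    (h : apolarAnnihilator G ≤ apolarAnnihilator P) : ∃ θ, apol θ G = P := by
  set N := max G.totalDegree P.totalDegree
  let V := restrictTotalDegree (Fin r) K N
  let W : Submodule K V := LinearMap.range <| LinearMap.codRestrict V (apolₗ.flip G) fun θ => by
    rw [LinearMap.flip_apply, apolₗ_apply, mem_restrictTotalDegree]
    exact (totalDegree_apol_le θ G).trans (le_max_left _ _)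
  have hP : (⟨P, (mem_restrictTotalDegree _ _ _).mpr (le_max_right _ _)⟩ : V) ∈
      (apolarPairing N).orthogonal ((apolarPairing N).orthogonal W) := by
    refine LinearMap.BilinForm.mem_orthogonal_iff.mpr fun Q hQ => ?_
    have hQG : apol Q.1 G = 0 := eq_zero_of_forall_coeff_zero_apol_monomial fun n => by
      have hn := LinearMap.BilinForm.mem_orthogonal_iff.mp hQ _
        (LinearMap.mem_range_self _ (monomial n 1))
      rw [apolarPairing_apply] at hn
      rwa [LinearMap.codRestrict_apply, LinearMap.flip_apply, apolₗ_apply, coeff_zero_apol_comm,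
        ← apol_mul, mul_comm, apol_mul] at hn
    rw [apolarPairing_apply, h hQG, coeff_zero]
  rw [LinearMap.BilinForm.orthogonal_orthogonal (apolarPairing_nondegenerate N)
    (apolarPairing_isRefl N)] at hP
  obtain ⟨θ, hθ⟩ := hP
  exact ⟨θ, (apolₗ_apply θ G).symm.trans (congrArg Subtype.val hθ)⟩

theorem colon_apolarAnnihilator_eq_sup {F G ℓ : MvPolynomial (Fin r) K} {c : K} (hc : c ≠ 0)
    (hℓ : apol ℓ F = c • G) :
    (apolarAnnihilator F).colon (apolarAnnihilator G) = apolarAnnihilator F ⊔ Ideal.span {ℓ} := by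
  apply le_antisymm
  · intro h hh
    have hle : apolarAnnihilator G ≤ apolarAnnihilator (apol h F) := fun Q hQ => by
      rw [mem_apolarAnnihilator, ← apol_mul, mul_comm]
      exact Submodule.mem_colon.mp hh Q hQ
    obtain ⟨θ, hθ⟩ := exists_apol_eq_of_apolarAnnihilator_le hle
    have h_rest : h - c⁻¹ • θ * ℓ ∈ apolarAnnihilator F := by
      rw [mem_apolarAnnihilator, apol_sub_left, apol_mul, hℓ, apol_smul_left, apol_smul_right,
        smul_smul, inv_mul_cancel₀ hc, one_smul, hθ, sub_self]
    rw [← sub_add_cancel h (c⁻¹ • θ * ℓ)]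
    exact add_mem (Ideal.mem_sup_left h_rest)
      (Ideal.mem_sup_right (Ideal.mul_mem_left _ _ (Ideal.mem_span_singleton_self ℓ)))
  · refine sup_le (fun f hf => Submodule.mem_colon.mpr fun Q _ => Ideal.mul_mem_right Q _ hf) ?_
    rw [Ideal.span_singleton_le_iff_mem, Submodule.mem_colon]
    intro Q hQ
    rw [smul_eq_mul, mul_comm, mem_apolarAnnihilator, apol_mul, hℓ, apol_smul_right,
      mem_apolarAnnihilator.mp hQ, smul_zero]

end MacaulayDuality

theorem stmt7 (K : Type*) [Field K] [CharZero K] (r : ℕ) (hr : 3 ≤ r) :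
    (Ideal.span (Set.range fun i : Fin r => (X i : MvPolynomial (Fin r) K) ^ 2)).colon
        (Ideal.span {f : MvPolynomial (Fin r) K | apol f (esymm (Fin r) K (r - 2)) = 0}) =
      Ideal.span ((Set.range fun i : Fin r => (X i : MvPolynomial (Fin r) K) ^ 2) ∪
        {(∑ i : Fin r, X i) ^ 2}) := by
  have hL : apol ((∑ i, X i) ^ 2) (∏ i, X i) = (2 : K) • esymm (Fin r) K (r - 2) := by
    rw [apol_sq_sum_X_prod_X (by omega), two_smul, two_smul]
  rw [span_setOf_apol_eq_zero, Ideal.span_union, ← apolarAnnihilator_prod_X]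
  exact colon_apolarAnnihilator_eq_sup two_ne_zero hL
end

section
/- Let r = 2q+1 and q ≥ 1. Then the product (x_1 - x_2)(x_3 - x_4)···(x_{r-2} - x_{r-1}) · e_2(x_1,...,x_r), where e_2 = Σ_{1≤i<j≤r} x_i x_j, lies in the ideal (x_1^2, x_2^2, ..., x_r^2) of K[x_1,...,x_r]. -/
/-!
Split off the first pair: `e₂(a, b, s) = a * b + (a + b) * Σ s + e₂(s)`, and
`(a - b) * (a * b + (a + b) * Σ s) = a ^ 2 * b - a * b ^ 2 + (a ^ 2 - b ^ 2) * Σ s`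
lies in any ideal containing `a ^ 2` and `b ^ 2`. So modulo `(x₁², …, x_r²)` each factor
`x_{2k-1} - x_{2k}` removes its two variables from `e₂`; after `q` steps only `e₂(x_r) = 0` is left.
-/

open MvPolynomial Finset

namespace Multiset

variable {R : Type*} [CommSemiring R]

theorem esymm_cons_succ (a : R) (s : Multiset R) (n : ℕ) :
    (a ::ₘ s).esymm (n + 1) = a * s.esymm n + s.esymm (n + 1) := by
  simp only [esymm, powersetCard_cons, map_add, sum_add, map_map, Function.comp_def, prod_cons,
    sum_map_mul_left]
  ring

theorem esymm_one (s : Multiset R) : s.esymm 1 = s.sum := by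
  simp [esymm, powersetCard_one, map_map]

theorem esymm_eq_zero_of_card_lt {s : Multiset R} {n : ℕ} (h : card s < n) : s.esymm n = 0 := by
  simp [esymm, powersetCard_eq_empty _ h]

end Multiset

section

variable {R : Type*} [CommRing R] {I : Ideal R}

theorem sub_mul_esymm_two_cons_cons_sub_mem {a b : R} (ha : a ^ 2 ∈ I) (hb : b ^ 2 ∈ I)
    (s : Multiset R) :
    (a - b) * (a ::ₘ b ::ₘ s).esymm 2 - (a - b) * s.esymm 2 ∈ I := by
  have hexpand : (a - b) * (a ::ₘ b ::ₘ s).esymm 2 - (a - b) * s.esymm 2 =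
      b * a ^ 2 - a * b ^ 2 + s.sum * (a ^ 2 - b ^ 2) := by
    simp only [Multiset.esymm_cons_succ, Multiset.esymm_one, Multiset.sum_cons]
    ring
  rw [hexpand]
  exact add_mem (sub_mem (I.mul_mem_left _ ha) (I.mul_mem_left _ hb))
    (I.mul_mem_left _ (sub_mem ha hb))

theorem prod_sub_mul_esymm_two_mem (q : ℕ) (x : ℕ → R) (hx : ∀ i, x i ^ 2 ∈ I) :
    (∏ k ∈ range q, (x (2 * k) - x (2 * k + 1))) *
      (((List.range (2 * q + 1)).map x : List R) : Multiset R).esymm 2 ∈ I := by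
  induction q generalizing x with
  | zero => simp [Multiset.esymm_eq_zero_of_card_lt]
  | succ q ih =>
    have hrange : List.range (2 * (q + 1) + 1) =
        0 :: 1 :: (List.range (2 * q + 1)).map (· + 2) := by
      rw [show 2 * (q + 1) + 1 = 2 * q + 1 + 1 + 1 by ring, List.range_succ_eq_map,
        List.range_succ_eq_map, List.map_cons, List.map_map]
      rfl
    set s : Multiset R := ↑((List.range (2 * q + 1)).map fun i => x (i + 2))
    have hprod : ∏ k ∈ range q, (x (2 * (k + 1)) - x (2 * (k + 1) + 1)) =
        ∏ k ∈ range q, (x (2 * k + 2) - x (2 * k + 1 + 2)) := by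
      simp only [mul_add, add_right_comm]
    have hpair := sub_mul_esymm_two_cons_cons_sub_mem (hx 0) (hx 1) s
    have htail := ih (fun i => x (i + 2)) fun i => hx (i + 2)
    rw [prod_range_succ', hrange, hprod]
    simp only [List.map_cons, List.map_map, ← Multiset.cons_coe, Function.comp_def]
    convert add_mem (I.mul_mem_left (∏ k ∈ range q, (x (2 * k + 2) - x (2 * k + 1 + 2))) hpair)
      (I.mul_mem_left (x 0 - x 1) htail) using 1
    ring

end

theorem stmt8 (K : Type*) [Field K] (q : ℕ) :
    (∏ k : Fin q,
        ((X (⟨2 * k.1, by have := k.2; omega⟩ : Fin (2 * q + 1)) : MvPolynomial (Fin (2 * q + 1)) K) -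
          X (⟨2 * k.1 + 1, by have := k.2; omega⟩ : Fin (2 * q + 1)))) *
      esymm (Fin (2 * q + 1)) K 2 ∈
    Ideal.span (Set.range fun i : Fin (2 * q + 1) =>
      (X i : MvPolynomial (Fin (2 * q + 1)) K) ^ 2) := by
  let x : ℕ → MvPolynomial (Fin (2 * q + 1)) K := fun i => X (Fin.ofNat (2 * q + 1) i)
  have hX : ∀ i (hi : i < 2 * q + 1), X ⟨i, hi⟩ = x i := fun i hi => by
    simp only [x, Fin.ofNat, Nat.mod_eq_of_lt hi]
  have hx : ∀ i, x i ^ 2 ∈ Ideal.span (Set.range fun i : Fin (2 * q + 1) =>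
      (X i : MvPolynomial (Fin (2 * q + 1)) K) ^ 2) := fun _ => Ideal.subset_span ⟨_, rfl⟩
  convert prod_sub_mul_esymm_two_mem q x hx using 2
  · rw [← Fin.prod_univ_eq_prod_range]
    simp only [hX]
  · rw [esymm_eq_multiset_esymm, Fin.univ_val_map]
    congr 2
    refine List.ext_getElem (by simp) fun i h _ => ?_
    simp only [List.getElem_ofFn, List.getElem_map, List.getElem_range, hX]
end

section
/- Let r = 2q+1, A = K[x_1,...,x_r]/(x_1^2,...,x_r^2,(x_1+···+x_r)^2). Then the Hilbert function of A is: H_A(t) = binomial(r,t) - binomial(r,t-2) for 0 ≤ t ≤ q, H_A(q+1) = binomial(r,q) - binomial(r,q-1), and H_A(t) = 0 for t < 0 or t > q+1. -/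
open Finset Matrix

section Comb

variable (F : Type*) [Field F] (r : ℕ)

/-- Level `s` of the Boolean lattice on `Fin r`. -/
abbrev lvl (s : ℕ) := {A : Finset (Fin r) // A.card = s}

/-- The "up" matrix from level `s` to level `s+1`. -/
def Mup (s : ℕ) : Matrix (lvl r (s+1)) (lvl r s) F :=
  Matrix.of fun B A => if A.1 ⊆ B.1 then 1 else 0

variable {r}

lemma filter_subset_powersetCard (T : Finset (Fin r)) (k : ℕ) :
    (Finset.powersetCard k (Finset.univ : Finset (Fin r))).filter (fun C => C ⊆ T) =
      Finset.powersetCard k T := by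
  ext C
  simp only [mem_filter, mem_powersetCard, subset_univ, true_and]
  tauto

lemma card_supersets (U : Finset (Fin r)) (m : ℕ) (h : U.card ≤ m) :
    (((Finset.powersetCard m (Finset.univ : Finset (Fin r)))).filter
      (fun B => U ⊆ B)).card = (r - U.card).choose (m - U.card) := by
  have : (((Finset.powersetCard m (Finset.univ : Finset (Fin r)))).filter
      (fun B => U ⊆ B)).card = (Finset.powersetCard (m - U.card) Uᶜ).card := by
    apply Finset.card_nbij' (fun B => B \ U) (fun C => C ∪ U)
    · intro B hB
      simp only [Finset.mem_coe, mem_filter, mem_powersetCard, subset_univ, true_and] at hB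
      simp only [Finset.mem_coe, mem_powersetCard]
      exact ⟨fun x hx => by simp [Finset.mem_sdiff.mp hx |>.2, (Finset.mem_sdiff.mp hx).1],
        by rw [Finset.card_sdiff_of_subset hB.2, hB.1]⟩
    · intro C hC
      simp only [Finset.mem_coe, mem_powersetCard] at hC
      have hdisj : Disjoint C U := by
        rw [Finset.disjoint_left]
        intro a ha
        have := hC.1 ha
        simp only [Finset.mem_compl] at this
        exact this
      simp only [Finset.mem_coe, mem_filter, mem_powersetCard, subset_univ, true_and]
      constructor
      · rw [Finset.card_union_of_disjoint hdisj, hC.2]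
        omega
      · exact Finset.subset_union_right
    · intro B hB
      simp only [Finset.mem_coe, mem_filter, mem_powersetCard, subset_univ, true_and] at hB
      exact Finset.sdiff_union_of_subset hB.2
    · intro C hC
      simp only [Finset.mem_coe, mem_powersetCard] at hC
      have hdisj : Disjoint C U := by
        rw [Finset.disjoint_left]
        intro a ha
        have := hC.1 ha
        simp only [Finset.mem_compl] at this
        exact this
      beta_reduce
      rw [Finset.union_sdiff_right, Finset.sdiff_eq_self_of_disjoint hdisj]
  rw [this, Finset.card_powersetCard, Finset.card_compl, Fintype.card_fin]

/-- Sum over a level equals sum over `powersetCard`. -/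
lemma sum_lvl (k : ℕ) (f : Finset (Fin r) → F) :
    (∑ B : lvl r k, f B.1) = ∑ B ∈ Finset.powersetCard k (Finset.univ : Finset (Fin r)), f B :=
  (Finset.sum_subtype _ (fun x => Finset.mem_powersetCard_univ) f).symm

/-- Sum over a level of an indicator equals a filter cardinality. -/
lemma sum_lvl_boole (k : ℕ) (p : Finset (Fin r) → Prop) [DecidablePred p] :
    (∑ B : lvl r k, (if p B.1 then (1:F) else 0)) =
      (((Finset.powersetCard k (Finset.univ : Finset (Fin r)))).filter p).card := by
  rw [show (∑ B : lvl r k, (if p B.1 then (1:F) else 0)) =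
      ∑ B ∈ Finset.powersetCard k (Finset.univ : Finset (Fin r)), (if p B then (1:F) else 0) from
    (Finset.sum_subtype _ (fun x => Finset.mem_powersetCard_univ)
      (fun B => if p B then (1:F) else 0)).symm, Finset.sum_boole]

lemma key_ident (s : ℕ) :
    (Mup F r (s+1))ᵀ * Mup F r (s+1) =
      Mup F r s * (Mup F r s)ᵀ + (((r:F) - (2*s+2)) • 1) := by
  ext A A'
  have hcardA : A.1.card ≤ r := by
    simpa using Finset.card_le_card (Finset.subset_univ A.1)
  simp only [Matrix.mul_apply, Matrix.add_apply, Matrix.transpose_apply, Matrix.smul_apply,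
    Matrix.one_apply, Mup, Matrix.of_apply, smul_eq_mul]
  have hL : (∑ B : lvl r (s+1+1), (if A.1 ⊆ B.1 then (1:F) else 0) *
      (if A'.1 ⊆ B.1 then (1:F) else 0)) =
      (((Finset.powersetCard (s+2) (Finset.univ : Finset (Fin r)))).filter
        (fun B => A.1 ∪ A'.1 ⊆ B)).card := by
    rw [← sum_lvl_boole]
    congr 1
    funext B
    by_cases h1 : A.1 ⊆ B.1 <;> by_cases h2 : A'.1 ⊆ B.1 <;>
      simp [h1, h2, Finset.union_subset_iff]
  have hR : (∑ C : lvl r s, (if C.1 ⊆ A.1 then (1:F) else 0) *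
      (if C.1 ⊆ A'.1 then (1:F) else 0)) =
      ((Finset.powersetCard s (A.1 ∩ A'.1)).card : F) := by
    rw [← filter_subset_powersetCard, ← sum_lvl_boole]
    congr 1
    funext C
    by_cases h1 : C.1 ⊆ A.1 <;> by_cases h2 : C.1 ⊆ A'.1 <;>
      simp [h1, h2, Finset.subset_inter_iff]
  rw [hL, hR]
  by_cases hAA : A = A'
  · subst hAA
    have hra : s + 1 ≤ r := by rw [← A.2]; exact hcardA
    rw [Finset.union_self, Finset.inter_self, if_pos rfl, mul_one,
      card_supersets A.1 (s+2) (by rw [A.2]; omega), Finset.card_powersetCard, A.2]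
    have e1 : (s+2) - (s+1) = 1 := by omega
    rw [e1, Nat.choose_one_right, Nat.choose_succ_self_right,
      Nat.cast_sub (by omega : s+1 ≤ r)]
    push_cast
    ring
  · simp only [if_neg hAA, mul_zero, add_zero]
    have hA : A.1.card = s + 1 := A.2
    have hA' : A'.1.card = s + 1 := A'.2
    have hui : (A.1 ∪ A'.1).card + (A.1 ∩ A'.1).card = 2*s + 2 := by
      rw [Finset.card_union_add_card_inter, hA, hA']; ring
    have hne : A.1 ≠ A'.1 := fun h => hAA (Subtype.ext h)
    have hu : s + 2 ≤ (A.1 ∪ A'.1).card := by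
      rcases lt_or_ge (A.1 ∪ A'.1).card (s+2) with h | h
      · exfalso
        have h1 : A.1 = A.1 ∪ A'.1 :=
          Finset.eq_of_subset_of_card_le Finset.subset_union_left (by omega)
        have h2 : A'.1 = A.1 ∪ A'.1 :=
          Finset.eq_of_subset_of_card_le Finset.subset_union_right (by omega)
        exact hne (h1.trans h2.symm)
      · exact h
    rw [Finset.card_powersetCard]
    rcases eq_or_lt_of_le hu with h | h
    · have e0 : (s+2) - (A.1 ∪ A'.1).card = 0 := by omega
      have e1 : (A.1 ∩ A'.1).card = s := by omega
      rw [card_supersets _ _ (by omega), e0, e1, Nat.choose_zero_right, Nat.choose_self]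
    · have hempt : ((Finset.powersetCard (s+2) (Finset.univ : Finset (Fin r))).filter
          (fun B => A.1 ∪ A'.1 ⊆ B)) = ∅ := by
        rw [Finset.filter_eq_empty_iff]
        intro B hB hsub
        rw [Finset.mem_powersetCard_univ] at hB
        have := Finset.card_le_card hsub
        omega
      rw [hempt]
      have hlt : (A.1 ∩ A'.1).card < s := by omega
      rw [Nat.choose_eq_zero_of_lt hlt]
      simp


section Definite

variable {F}

lemma dot_self_nonneg (ι : Type*) [Fintype ι] (v : ι → ℚ) : 0 ≤ dotProduct v v :=
  Finset.sum_nonneg fun i _ => mul_self_nonneg (v i)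

lemma dot_aux {ι κ : Type*} [Fintype ι] [Fintype κ] (N : Matrix ι κ ℚ) (v : ι → ℚ) :
    ((N * Nᵀ).mulVec v) ⬝ᵥ v = (Nᵀ.mulVec v) ⬝ᵥ (Nᵀ.mulVec v) := by
  rw [← Matrix.mulVec_mulVec, dotProduct_comm, Matrix.dotProduct_mulVec,
    ← Matrix.mulVec_transpose]

lemma dot_aux' {ι κ : Type*} [Fintype ι] [Fintype κ] (N : Matrix ι κ ℚ) (v : κ → ℚ) :
    ((Nᵀ * N).mulVec v) ⬝ᵥ v = (N.mulVec v) ⬝ᵥ (N.mulVec v) := by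
  simpa using dot_aux Nᵀ v

lemma mup_inj_rat (s : ℕ) (h : 2*(s+1) < r) :
    Function.Injective ((Mup ℚ r (s+1)).mulVec) := by
  have key := key_ident ℚ (r := r) s
  intro v w hvw
  have hsub : (Mup ℚ r (s+1)).mulVec (v - w) = 0 := by
    rw [Matrix.mulVec_sub, hvw, sub_self]
  set u := v - w with hu
  suffices hz : u = 0 by exact sub_eq_zero.mp hz
  by_contra hne
  have h0 : (((Mup ℚ r (s+1))ᵀ * Mup ℚ r (s+1)).mulVec u) ⬝ᵥ u = 0 := by
    rw [← Matrix.mulVec_mulVec, hsub, Matrix.mulVec_zero, zero_dotProduct]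
  rw [key, Matrix.add_mulVec, add_dotProduct, dot_aux, Matrix.smul_mulVec,
    Matrix.one_mulVec, smul_dotProduct, smul_eq_mul] at h0
  have h1 : 0 ≤ ((Mup ℚ r s)ᵀ.mulVec u) ⬝ᵥ ((Mup ℚ r s)ᵀ.mulVec u) := dot_self_nonneg _ _
  have h2 : 0 < u ⬝ᵥ u := by
    rcases (dot_self_nonneg _ u).eq_or_lt with h' | h'
    · exact absurd (dotProduct_self_eq_zero.mp h'.symm) hne
    · exact h'
  have h3 : 0 < (r:ℚ) - (2*s+2) := by
    have : ((2*(s+1) : ℕ) : ℚ) < ((r:ℕ) : ℚ) := by exact_mod_cast h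
    push_cast at this
    linarith
  nlinarith

lemma mup_transpose_inj_rat (s : ℕ) (h : r < 2*(s+1)) :
    Function.Injective ((Mup ℚ r s)ᵀ.mulVec) := by
  have key := key_ident ℚ (r := r) s
  have key' : Mup ℚ r s * (Mup ℚ r s)ᵀ =
      (Mup ℚ r (s+1))ᵀ * Mup ℚ r (s+1) + (((2*s+2 : ℚ) - r) • 1) := by
    rw [key, add_assoc, ← add_smul,
      show ((r:ℚ) - (2*↑s+2)) + ((2*↑s+2 : ℚ) - ↑r) = 0 by ring, zero_smul, add_zero]
  intro v w hvw
  have hsub : (Mup ℚ r s)ᵀ.mulVec (v - w) = 0 := by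
    rw [Matrix.mulVec_sub, hvw, sub_self]
  set u := v - w with hu
  suffices hz : u = 0 by exact sub_eq_zero.mp hz
  by_contra hne
  have h0 : ((Mup ℚ r s * (Mup ℚ r s)ᵀ).mulVec u) ⬝ᵥ u = 0 := by
    rw [← Matrix.mulVec_mulVec, hsub, Matrix.mulVec_zero, zero_dotProduct]
  rw [key', Matrix.add_mulVec, add_dotProduct, dot_aux', Matrix.smul_mulVec,
    Matrix.one_mulVec, smul_dotProduct, smul_eq_mul] at h0
  have h1 : 0 ≤ ((Mup ℚ r (s+1)).mulVec u) ⬝ᵥ ((Mup ℚ r (s+1)).mulVec u) := dot_self_nonneg _ _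
  have h2 : 0 < u ⬝ᵥ u := by
    rcases (dot_self_nonneg _ u).eq_or_lt with h' | h'
    · exact absurd (dotProduct_self_eq_zero.mp h'.symm) hne
    · exact h'
  have h3 : 0 < (2*(s:ℚ)+2) - r := by
    have : ((r:ℕ) : ℚ) < ((2*(s+1) : ℕ) : ℚ) := by exact_mod_cast h
    push_cast at this
    linarith
  nlinarith

lemma mup_surj_rat (s : ℕ) (h : r < 2*(s+1)) :
    Function.Surjective ((Mup ℚ r s).mulVec) := by
  have hinj := mup_transpose_inj_rat (r := r) s h
  have hker : LinearMap.ker ((Mup ℚ r s)ᵀ.mulVecLin) = ⊥ := by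
    rw [LinearMap.ker_eq_bot]
    intro v w hvw
    simp only [Matrix.mulVecLin_apply] at hvw
    exact hinj hvw
  have hrank : ((Mup ℚ r s)ᵀ).rank = Fintype.card (lvl r (s+1)) := by
    have := LinearMap.finrank_range_add_finrank_ker ((Mup ℚ r s)ᵀ.mulVecLin)
    rw [hker, finrank_bot, add_zero, Module.finrank_fintype_fun_eq_card] at this
    exact this
  have hrank2 : (Mup ℚ r s).rank = Fintype.card (lvl r (s+1)) := by
    rw [← Matrix.rank_transpose]; exact hrank
  have htop : LinearMap.range ((Mup ℚ r s).mulVecLin) = ⊤ := by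
    apply Submodule.eq_top_of_finrank_eq
    rw [← Matrix.rank, hrank2, Module.finrank_fintype_fun_eq_card]
  intro y
  obtain ⟨x, hx⟩ := LinearMap.range_eq_top.mp htop y
  simp only [Matrix.mulVecLin_apply] at hx
  exact ⟨x, hx⟩


end Definite

section Transfer

variable {m n : Type*} [Fintype m] [Fintype n] [DecidableEq m] [DecidableEq n]
variable {K : Type*} [Field K] [CharZero K]

lemma exists_left_inv {M : Matrix m n ℚ} (h : Function.Injective M.mulVec) :
    ∃ N : Matrix n m ℚ, N * M = 1 := by
  have hker : LinearMap.ker (Matrix.toLin' M) = ⊥ := by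
    rw [LinearMap.ker_eq_bot]
    intro v w hvw
    exact h (by simpa [Matrix.toLin'_apply] using hvw)
  obtain ⟨g, hg⟩ := LinearMap.exists_leftInverse_of_injective (Matrix.toLin' M) hker
  refine ⟨LinearMap.toMatrix' g, ?_⟩
  have : LinearMap.toMatrix' (g ∘ₗ Matrix.toLin' M) = LinearMap.toMatrix' g * M := by
    rw [LinearMap.toMatrix'_comp, LinearMap.toMatrix'_toLin']
  rw [← this, hg, LinearMap.toMatrix'_id]

lemma exists_right_inv {M : Matrix m n ℚ} (h : Function.Surjective M.mulVec) :
    ∃ N : Matrix n m ℚ, M * N = 1 := by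
  have hrange : LinearMap.range (Matrix.toLin' M) = ⊤ := by
    rw [LinearMap.range_eq_top]
    intro y
    obtain ⟨x, hx⟩ := h y
    exact ⟨x, by simpa [Matrix.toLin'_apply] using hx⟩
  obtain ⟨g, hg⟩ := (Matrix.toLin' M).exists_rightInverse_of_surjective hrange
  refine ⟨LinearMap.toMatrix' g, ?_⟩
  have : LinearMap.toMatrix' (Matrix.toLin' M ∘ₗ g) = M * LinearMap.toMatrix' g := by
    rw [LinearMap.toMatrix'_comp, LinearMap.toMatrix'_toLin']
  rw [← this, hg, LinearMap.toMatrix'_id]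

lemma inj_map_of_inj (M : Matrix m n ℚ) (h : Function.Injective M.mulVec) :
    Function.Injective ((M.map (algebraMap ℚ K)).mulVec) := by
  obtain ⟨N, hN⟩ := exists_left_inv h
  intro v w hvw
  have : (N.map (algebraMap ℚ K)) * (M.map (algebraMap ℚ K)) = 1 := by
    rw [← Matrix.map_mul, hN, Matrix.map_one _ (map_zero _) (_root_.map_one _)]
  calc v = ((N.map (algebraMap ℚ K)) * (M.map (algebraMap ℚ K))).mulVec v := by
            rw [this, Matrix.one_mulVec]
    _ = (N.map (algebraMap ℚ K)).mulVec ((M.map (algebraMap ℚ K)).mulVec v) := by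
            rw [Matrix.mulVec_mulVec]
    _ = (N.map (algebraMap ℚ K)).mulVec ((M.map (algebraMap ℚ K)).mulVec w) := by rw [hvw]
    _ = w := by rw [Matrix.mulVec_mulVec, this, Matrix.one_mulVec]

lemma surj_map_of_surj (M : Matrix m n ℚ) (h : Function.Surjective M.mulVec) :
    Function.Surjective ((M.map (algebraMap ℚ K)).mulVec) := by
  obtain ⟨N, hN⟩ := exists_right_inv h
  have hone : (M.map (algebraMap ℚ K)) * (N.map (algebraMap ℚ K)) = 1 := by
    rw [← Matrix.map_mul, hN, Matrix.map_one _ (map_zero _) (_root_.map_one _)]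
  intro y
  refine ⟨(N.map (algebraMap ℚ K)).mulVec y, ?_⟩
  rw [Matrix.mulVec_mulVec, hone, Matrix.one_mulVec]

variable (K) in
lemma Mup_map_eq (r s : ℕ) : (Mup ℚ r s).map (algebraMap ℚ K) = Mup K r s := by
  ext B A
  simp only [Mup, Matrix.map_apply, Matrix.of_apply, apply_ite (algebraMap ℚ K),
    _root_.map_one, map_zero]

variable (K) in
lemma mup_inj_K (r s : ℕ) (h : 2*s < r) : Function.Injective ((Mup K r s).mulVec) := by
  rcases s with _ | s'
  · -- level 0
    intro v w hvw
    haveI : Unique (lvl r 0) :=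
      ⟨⟨⟨∅, Finset.card_empty⟩⟩, fun A => Subtype.ext (Finset.card_eq_zero.mp A.2)⟩
    have hr0 : 0 < r := by omega
    have hB : (({⟨0, hr0⟩} : Finset (Fin r)).card) = 1 := Finset.card_singleton _
    have h1 := congrFun hvw ⟨{⟨0, hr0⟩}, hB⟩
    have hv : ∀ u : lvl r 0 → K, (Mup K r 0).mulVec u ⟨{⟨0, hr0⟩}, hB⟩ = u default := by
      intro u
      have he : (Mup K r 0).mulVec u ⟨{⟨0, hr0⟩}, hB⟩ =
          ∑ A : lvl r 0, (if A.1 ⊆ ({⟨0, hr0⟩} : Finset (Fin r)) then (1:K) else 0) * u A := rfl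
      rw [he, Fintype.sum_unique]
      have hd : ((default : lvl r 0) : Finset (Fin r)) = ∅ :=
        Finset.card_eq_zero.mp (default : lvl r 0).2
      simp [hd]
    rw [hv v, hv w] at h1
    funext A
    rw [Unique.eq_default A]
    exact h1
  · rw [← Mup_map_eq K]
    exact inj_map_of_inj _ (mup_inj_rat s' h)

variable (K) in
lemma mup_surj_K (r s : ℕ) (h : r < 2*(s+1)) : Function.Surjective ((Mup K r s).mulVec) := by
  rw [← Mup_map_eq K]
  exact surj_map_of_surj _ (mup_surj_rat s h)

end Transfer

end Comb
section Poly

open MvPolynomial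

variable {K : Type*} [Field K] {r : ℕ}

/-- The squarefree exponent corresponding to a finset. -/
def ind (A : Finset (Fin r)) : Fin r →₀ ℕ :=
  ⟨A, fun i => if i ∈ A then 1 else 0, fun i => by simp⟩

lemma ind_apply (A : Finset (Fin r)) (i : Fin r) : ind A i = if i ∈ A then 1 else 0 := rfl

lemma ind_degree (A : Finset (Fin r)) : (ind A).degree = A.card := by
  rw [Finsupp.degree_apply]
  have hs : (ind A).support = A := rfl
  rw [hs]
  rw [Finset.sum_congr rfl (fun i hi => by rw [ind_apply, if_pos hi])]
  simp

lemma ind_inj : Function.Injective (ind (r := r)) := fun A B h =>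
  congrArg Finsupp.support h

lemma pair_le_ind {i j : Fin r} {A : Finset (Fin r)} :
    (Finsupp.single i 1 + Finsupp.single j 1 ≤ ind A) ↔ (i ≠ j ∧ i ∈ A ∧ j ∈ A) := by
  rw [Finsupp.le_def]
  constructor
  · intro h
    have hi := h i
    have hj := h j
    simp only [Finsupp.add_apply, Finsupp.single_apply, ind_apply] at hi hj
    by_cases hij : i = j
    · exfalso
      subst hij
      simp only [if_pos rfl] at hi
      split_ifs at hi <;> omega
    · refine ⟨hij, ?_, ?_⟩
      · by_cases hiA : i ∈ A
        · exact hiA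
        · exfalso
          rw [if_neg (Ne.symm hij), if_neg hiA] at hi
          simp at hi
      · by_cases hjA : j ∈ A
        · exact hjA
        · exfalso
          rw [if_neg hij, if_neg hjA] at hj
          simp at hj
  · rintro ⟨hij, hiA, hjA⟩ k
    simp only [Finsupp.add_apply, Finsupp.single_apply, ind_apply]
    by_cases hik : i = k <;> by_cases hjk : j = k
    · exact absurd (hik.trans hjk.symm) hij
    · subst hik
      simp [hjk, hiA]
    · subst hjk
      simp [hik, hjA]
    · simp [hik, hjk]

lemma ind_sub_pair {i j : Fin r} {A : Finset (Fin r)} (hij : i ≠ j) (hiA : i ∈ A) (hjA : j ∈ A) :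
    ind A - (Finsupp.single i 1 + Finsupp.single j 1) = ind ((A.erase i).erase j) := by
  ext k
  rw [Finsupp.tsub_apply]
  simp only [Finsupp.add_apply, Finsupp.single_apply, ind_apply, Finset.mem_erase]
  by_cases hik : i = k <;> by_cases hjk : j = k
  · exact absurd (hik.trans hjk.symm) hij
  · subst hik
    simp [hjk, hiA, Ne.symm hij]
  · subst hjk
    simp [hik, hjA, hij]
  · by_cases hkA : k ∈ A <;>
      simp [hkA, hik, hjk, Ne.symm hik, Ne.symm hjk]

lemma not_two_le_ind (i : Fin r) (A : Finset (Fin r)) :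
    ¬ (Finsupp.single i 2 ≤ ind A) := by
  intro h
  have hi := Finsupp.le_def.mp h i
  simp only [Finsupp.single_apply, if_pos rfl, ind_apply] at hi
  split_ifs at hi <;> omega

/-- `ψ t` sends a vector indexed by `t`-subsets to the corresponding squarefree polynomial. -/
noncomputable def psiMap (t : ℕ) : (lvl r t → K) →ₗ[K] MvPolynomial (Fin r) K where
  toFun v := ∑ A : lvl r t, v A • monomial (ind A.1) (1 : K)
  map_add' v w := by
    simp only [Pi.add_apply, add_smul]
    rw [Finset.sum_add_distrib]
  map_smul' c v := by
    simp only [RingHom.id_apply]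
    rw [Finset.smul_sum]
    simp only [Pi.smul_apply, smul_smul, smul_eq_mul]

/-- `piMap t` extracts the coefficients of squarefree monomials of degree `t`. -/
noncomputable def piMap (t : ℕ) : MvPolynomial (Fin r) K →ₗ[K] (lvl r t → K) :=
  LinearMap.pi (fun A => lcoeff K (ind A.1))

lemma piMap_apply (t : ℕ) (p : MvPolynomial (Fin r) K) (A : lvl r t) :
    piMap t p A = coeff (ind A.1) p := rfl

lemma coeff_ind_psiMap (t : ℕ) (v : lvl r t → K) (A : Finset (Fin r)) :
    coeff (ind A) (psiMap t v) =
      if h : A.card = t then v ⟨A, h⟩ else 0 := by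
  show coeff (ind A) (∑ A' : lvl r t, v A' • monomial (ind A'.1) (1 : K)) = _
  rw [coeff_sum]
  simp only [coeff_smul, coeff_monomial, smul_eq_mul]
  split_ifs with h
  · rw [Finset.sum_eq_single (⟨A, h⟩ : lvl r t)]
    · simp
    · intro B _ hBA
      have : ind B.1 ≠ ind A := fun he => hBA (Subtype.ext (ind_inj he))
      simp [this]
    · intro habs
      exact absurd (Finset.mem_univ _) habs
  · apply Finset.sum_eq_zero
    intro B _
    have : ind B.1 ≠ ind A := by
      intro he
      apply h
      rw [← ind_inj he]
      exact B.2
    simp [this]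

lemma piMap_psiMap (t : ℕ) (v : lvl r t → K) : piMap t (psiMap t v) = v := by
  funext A
  rw [piMap_apply, coeff_ind_psiMap, dif_pos A.2]

lemma psiMap_isHomogeneous (t : ℕ) (v : lvl r t → K) :
    (psiMap t v) ∈ homogeneousSubmodule (Fin r) K t := by
  have he : psiMap t v = ∑ A : lvl r t, v A • monomial (ind A.1) (1:K) := rfl
  rw [he]
  apply Submodule.sum_mem
  intro A _
  apply Submodule.smul_mem
  rw [mem_homogeneousSubmodule]
  exact isHomogeneous_monomial 1 (by rw [ind_degree, A.2])

end Poly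
section Poly2

open MvPolynomial Finset

variable {K : Type*} [Field K] {r : ℕ}

lemma powersetCard_eq_image_erase {T : Finset (Fin r)} {k : ℕ} (hT : T.card = k + 1) :
    Finset.powersetCard k T = T.image (fun i => T.erase i) := by
  ext B
  simp only [Finset.mem_powersetCard, Finset.mem_image]
  constructor
  · rintro ⟨hsub, hcard⟩
    have hsd : (T \ B).card = 1 := by
      rw [Finset.card_sdiff_of_subset hsub]; omega
    obtain ⟨i, hi⟩ := Finset.card_eq_one.mp hsd
    have hiT : i ∈ T := by
      have : i ∈ T \ B := hi ▸ Finset.mem_singleton_self i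
      exact (Finset.mem_sdiff.mp this).1
    refine ⟨i, hiT, ?_⟩
    have hiB : i ∉ B := by
      have : i ∈ T \ B := hi ▸ Finset.mem_singleton_self i
      exact (Finset.mem_sdiff.mp this).2
    apply Finset.eq_of_subset_of_card_le
    · intro x hx
      rw [Finset.mem_erase] at hx
      by_contra hxB
      have : x ∈ T \ B := Finset.mem_sdiff.mpr ⟨hx.2, hxB⟩
      rw [hi, Finset.mem_singleton] at this
      exact hx.1 this
    · rw [Finset.card_erase_of_mem hiT, hT, hcard]
      omega
  · rintro ⟨i, hiT, rfl⟩
    exact ⟨Finset.erase_subset _ _, by rw [Finset.card_erase_of_mem hiT, hT]; omega⟩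

/-- Reindex a sum over level `k` restricted to subsets of a `(k+1)`-set. -/
lemma sum_lvl_subset {k : ℕ} {T : Finset (Fin r)} (hT : T.card = k + 1)
    (g : Finset (Fin r) → K) :
    (∑ B : lvl r k, if B.1 ⊆ T then g B.1 else 0) = ∑ i ∈ T, g (T.erase i) := by
  rw [sum_lvl K (f := fun B => if B ⊆ T then g B else 0), ← Finset.sum_filter,
    filter_subset_powersetCard, powersetCard_eq_image_erase hT,
    Finset.sum_image (fun i hi j hj h =>
      Finset.erase_injOn T (Finset.mem_coe.mpr hi) (Finset.mem_coe.mpr hj) h)]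

lemma coeff_ind_mul_Lsq (c : MvPolynomial (Fin r) K) (A : Finset (Fin r)) :
    coeff (ind A) (c * (∑ i : Fin r, X i)^2) =
      ∑ i : Fin r, ∑ j : Fin r,
        (if i ≠ j ∧ i ∈ A ∧ j ∈ A then coeff (ind ((A.erase i).erase j)) c else 0) := by
  rw [sq, Finset.sum_mul_sum]
  rw [show (∑ i : Fin r, ∑ j : Fin r, X i * X j : MvPolynomial (Fin r) K) =
    ∑ i : Fin r, ∑ j : Fin r,
      monomial (Finsupp.single i 1 + Finsupp.single j 1) (1 : K) by
    refine Finset.sum_congr rfl fun i _ => Finset.sum_congr rfl fun j _ => ?_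
    rw [X, X, monomial_mul, one_mul]]
  rw [Finset.mul_sum, coeff_sum]
  refine Finset.sum_congr rfl fun i _ => ?_
  rw [Finset.mul_sum, coeff_sum]
  refine Finset.sum_congr rfl fun j _ => ?_
  rw [coeff_mul_monomial']
  by_cases h : i ≠ j ∧ i ∈ A ∧ j ∈ A
  · rw [if_pos (pair_le_ind.mpr h), if_pos h, ind_sub_pair h.1 h.2.1 h.2.2, mul_one]
  · rw [if_neg (fun hle => h (pair_le_ind.mp hle)), if_neg h]

/-- The crucial identity: extracting squarefree coefficients of `c·L²` is `U²` applied to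
the squarefree coefficients of `c`. -/
lemma piMap_mul_Lsq (s : ℕ) (c : MvPolynomial (Fin r) K) :
    piMap (s+2) (c * (∑ i : Fin r, X i)^2) =
      (Mup K r (s+1) * Mup K r s).mulVec (piMap s c) := by
  funext A
  rw [piMap_apply, coeff_ind_mul_Lsq]
  have hRHS : (Mup K r (s+1) * Mup K r s).mulVec (piMap s c) A =
      ∑ B : lvl r (s+1), (if B.1 ⊆ A.1 then
        (∑ C : lvl r s, if C.1 ⊆ B.1 then coeff (ind C.1) c else 0) else 0) := by
    have h0 : (Mup K r (s+1) * Mup K r s).mulVec (piMap s c) A =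
        ∑ C : lvl r s, (∑ B : lvl r (s+1), Mup K r (s+1) A B * Mup K r s B C) *
          piMap s c C := by
      rfl
    rw [h0]
    simp_rw [Finset.sum_mul]
    rw [Finset.sum_comm]
    refine Finset.sum_congr rfl fun B _ => ?_
    by_cases hB : B.1 ⊆ A.1
    · rw [if_pos hB]
      refine Finset.sum_congr rfl fun C _ => ?_
      simp only [Mup, Matrix.of_apply, if_pos hB, one_mul, piMap_apply, boole_mul]
    · rw [if_neg hB]
      apply Finset.sum_eq_zero
      intro C _
      simp only [Mup, Matrix.of_apply, if_neg hB, zero_mul, mul_zero]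
  rw [hRHS, sum_lvl_subset A.2
    (g := fun B => ∑ C : lvl r s, if C.1 ⊆ B then coeff (ind C.1) c else 0)]
  have hinner : ∀ i ∈ A.1, (∑ C : lvl r s, if C.1 ⊆ A.1.erase i then coeff (ind C.1) c else 0)
      = ∑ j ∈ A.1.erase i, coeff (ind ((A.1.erase i).erase j)) c := by
    intro i hi
    exact sum_lvl_subset (by rw [Finset.card_erase_of_mem hi, A.2]; omega)
      (g := fun C => coeff (ind C) c)
  rw [Finset.sum_congr rfl hinner]
  have hLHS : ∀ i : Fin r, (∑ j : Fin r,
      if i ≠ j ∧ i ∈ A.1 ∧ j ∈ A.1 then coeff (ind ((A.1.erase i).erase j)) c else 0) =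
      if i ∈ A.1 then ∑ j ∈ A.1.erase i, coeff (ind ((A.1.erase i).erase j)) c else 0 := by
    intro i
    by_cases hiA : i ∈ A.1
    · rw [if_pos hiA, ← Finset.sum_filter]
      apply Finset.sum_congr _ (fun j _ => rfl)
      ext j
      simp only [Finset.mem_filter, Finset.mem_univ, true_and, Finset.mem_erase]
      constructor
      · rintro ⟨hij, _, hjA⟩
        exact ⟨Ne.symm hij, hjA⟩
      · rintro ⟨hji, hjA⟩
        exact ⟨Ne.symm hji, hiA, hjA⟩
    · rw [if_neg hiA]
      apply Finset.sum_eq_zero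
      intro j _
      exact if_neg (fun h => hiA h.2.1)
  rw [Finset.sum_congr rfl (fun i _ => hLHS i), Finset.sum_ite_mem, Finset.univ_inter]

end Poly2
section Poly3

open MvPolynomial Finset

variable {K : Type*} [Field K] {r : ℕ}

/-- The ideal generated by the squares of the variables. -/
noncomputable def sqIdeal (K : Type*) [Field K] (r : ℕ) : Ideal (MvPolynomial (Fin r) K) :=
  Ideal.span (Set.range fun i : Fin r => (X i : MvPolynomial (Fin r) K) ^ 2)

lemma sq_ideal_coeff_zero {m : MvPolynomial (Fin r) K} (hm : m ∈ sqIdeal K r)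
    (A : Finset (Fin r)) : coeff (ind A) m = 0 := by
  rw [sqIdeal, Ideal.span, Submodule.mem_span_range_iff_exists_fun] at hm
  obtain ⟨c, hc⟩ := hm
  rw [← hc, coeff_sum]
  apply Finset.sum_eq_zero
  intro i _
  rw [smul_eq_mul, X_pow_eq_monomial, coeff_mul_monomial',
    if_neg (not_two_le_ind i A)]

lemma mem_sq_ideal_of_coeff {p : MvPolynomial (Fin r) K}
    (h : ∀ A : Finset (Fin r), coeff (ind A) p = 0) : p ∈ sqIdeal K r := by
  rw [← support_sum_monomial_coeff p]
  apply Submodule.sum_mem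
  intro d hd
  by_cases hsf : ∀ i, d i ≤ 1
  · exfalso
    have hdi : d = ind d.support := by
      ext i
      rw [ind_apply]
      by_cases h0 : i ∈ d.support
      · rw [if_pos h0]
        have h1 := Finsupp.mem_support_iff.mp h0
        have h2 := hsf i
        omega
      · rw [if_neg h0]
        exact Finsupp.notMem_support_iff.mp h0
    have := h d.support
    rw [← hdi] at this
    exact Finsupp.mem_support_iff.mp hd this
  · push_neg at hsf
    obtain ⟨i, hi⟩ := hsf
    have heq : monomial d (coeff d p) =
        monomial (d - Finsupp.single i 2) (coeff d p) * (X i : MvPolynomial (Fin r) K) ^ 2 := by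
      rw [X_pow_eq_monomial, monomial_mul, mul_one,
        tsub_add_cancel_of_le (Finsupp.single_le_iff.mpr (by omega))]
    rw [heq]
    exact Ideal.mul_mem_left _ _ (Ideal.subset_span ⟨i, rfl⟩)

lemma homog_coeff_ind_zero {p : MvPolynomial (Fin r) K} {t : ℕ}
    (hp : p ∈ homogeneousSubmodule (Fin r) K t) {A : Finset (Fin r)} (hA : A.card ≠ t) :
    coeff (ind A) p = 0 :=
  ((mem_homogeneousSubmodule _ _).mp hp).coeff_eq_zero (by rw [ind_degree]; exact hA)

lemma sub_psiPi_mem {p : MvPolynomial (Fin r) K} {t : ℕ}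
    (hp : p ∈ homogeneousSubmodule (Fin r) K t) :
    p - psiMap t (piMap t p) ∈ sqIdeal K r := by
  apply mem_sq_ideal_of_coeff
  intro A
  rw [MvPolynomial.coeff_sub, coeff_ind_psiMap]
  split_ifs with h
  · rw [piMap_apply]
    exact sub_self _
  · rw [homog_coeff_ind_zero hp h, sub_zero]

lemma L_pow_homog : ((∑ i : Fin r, X i : MvPolynomial (Fin r) K) ^ 2).IsHomogeneous 2 := by
  have hL : (∑ i : Fin r, X i : MvPolynomial (Fin r) K).IsHomogeneous 1 :=
    IsHomogeneous.sum _ _ _ (fun i _ => isHomogeneous_X _ _)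
  simpa using hL.pow 2

lemma mul_Lsq_homog {s : ℕ} {c : MvPolynomial (Fin r) K}
    (hc : c ∈ homogeneousSubmodule (Fin r) K s) :
    c * (∑ i : Fin r, X i) ^ 2 ∈ homogeneousSubmodule (Fin r) K (s + 2) := by
  rw [mem_homogeneousSubmodule] at hc ⊢
  exact hc.mul L_pow_homog

end Poly3
set_option synthInstance.maxHeartbeats 1000000
set_option maxHeartbeats 2000000

section Poly4

open MvPolynomial Finset

variable {K : Type*} [Field K] {r : ℕ}

variable (K r) in
/-- The full relation ideal. -/
noncomputable def relIdeal : Ideal (MvPolynomial (Fin r) K) :=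
  Ideal.span ((Set.range fun i : Fin r => (X i : MvPolynomial (Fin r) K) ^ 2) ∪
    {(∑ i : Fin r, X i) ^ 2})

lemma sqIdeal_le_relIdeal : sqIdeal K r ≤ relIdeal K r :=
  Ideal.span_mono Set.subset_union_left

lemma Lsq_mem_relIdeal : ((∑ i : Fin r, X i : MvPolynomial (Fin r) K) ^ 2) ∈ relIdeal K r :=
  Ideal.subset_span (Set.mem_union_right _ rfl)

/-- The degree-`t` graded map. -/
noncomputable def phiMap (t : ℕ) : (lvl r t → K) →ₗ[K] (MvPolynomial (Fin r) K ⧸ relIdeal K r) :=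
  (Ideal.Quotient.mkₐ K (relIdeal K r)).toLinearMap ∘ₗ psiMap t

lemma phiMap_apply_zero_iff (t : ℕ) (v : lvl r t → K) :
    phiMap t v = 0 ↔ psiMap t v ∈ relIdeal K r := by
  rw [phiMap, LinearMap.comp_apply, AlgHom.toLinearMap_apply, Ideal.Quotient.mkₐ_eq_mk,
    Ideal.Quotient.eq_zero_iff_mem]

lemma mkₐ_eq_zero_iff (p : MvPolynomial (Fin r) K) :
    (Ideal.Quotient.mkₐ K (relIdeal K r)).toLinearMap p = 0 ↔ p ∈ relIdeal K r := by
  rw [AlgHom.toLinearMap_apply, Ideal.Quotient.mkₐ_eq_mk, Ideal.Quotient.eq_zero_iff_mem]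

lemma range_phiMap (t : ℕ) :
    LinearMap.range (phiMap (K := K) (r := r) t) =
      (homogeneousSubmodule (Fin r) K t).map
        (Ideal.Quotient.mkₐ K (relIdeal K r)).toLinearMap := by
  apply le_antisymm
  · rw [phiMap, LinearMap.range_comp]
    apply Submodule.map_mono
    rintro p ⟨v, rfl⟩
    exact psiMap_isHomogeneous t v
  · rintro x ⟨p, hp, rfl⟩
    refine ⟨piMap t p, ?_⟩
    rw [phiMap, LinearMap.comp_apply]
    have hsub : p - psiMap t (piMap t p) ∈ relIdeal K r :=
      sqIdeal_le_relIdeal (sub_psiPi_mem hp)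
    have : (Ideal.Quotient.mkₐ K (relIdeal K r)).toLinearMap (p - psiMap t (piMap t p)) = 0 :=
      (mkₐ_eq_zero_iff _).mpr hsub
    rw [map_sub, sub_eq_zero] at this
    exact this.symm

lemma mem_relIdeal_decomp {p : MvPolynomial (Fin r) K} (hp : p ∈ relIdeal K r) :
    ∃ m ∈ sqIdeal K r, ∃ c, p = m + c * (∑ i : Fin r, X i) ^ 2 := by
  rw [relIdeal, Ideal.span_union] at hp
  obtain ⟨m, hm, z, hz, rfl⟩ := Submodule.mem_sup.mp hp
  obtain ⟨c, rfl⟩ := Ideal.mem_span_singleton'.mp hz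
  exact ⟨m, hm, c, rfl⟩

lemma ker_phiMap (s : ℕ) :
    LinearMap.ker (phiMap (K := K) (r := r) (s+2)) =
      LinearMap.range (Matrix.mulVecLin (Mup K r (s+1) * Mup K r s)) := by
  apply le_antisymm
  · intro v hv
    rw [LinearMap.mem_ker, phiMap_apply_zero_iff] at hv
    obtain ⟨m, hm, c, hc⟩ := mem_relIdeal_decomp hv
    refine ⟨piMap s c, ?_⟩
    rw [Matrix.mulVecLin_apply, ← piMap_mul_Lsq]
    have : v = piMap (s+2) (psiMap (s+2) v) := (piMap_psiMap _ _).symm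
    rw [this, hc, map_add]
    have hz : piMap (s+2) m = 0 := by
      funext A
      rw [piMap_apply, sq_ideal_coeff_zero hm]
      rfl
    rw [hz, zero_add]
  · rintro _ ⟨w, rfl⟩
    rw [LinearMap.mem_ker, Matrix.mulVecLin_apply, phiMap_apply_zero_iff]
    set c := psiMap s w with hcdef
    have h1 : piMap s c = w := piMap_psiMap _ _
    have h2 : (Mup K r (s+1) * Mup K r s).mulVec w =
        piMap (s+2) (c * (∑ i : Fin r, X i) ^ 2) := by
      rw [piMap_mul_Lsq, h1]
    rw [h2]
    have hcL : c * (∑ i : Fin r, X i) ^ 2 ∈ homogeneousSubmodule (Fin r) K (s+2) :=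
      mul_Lsq_homog (psiMap_isHomogeneous s w)
    have hsub := sqIdeal_le_relIdeal (sub_psiPi_mem hcL)
    have hcLmem : c * (∑ i : Fin r, X i) ^ 2 ∈ relIdeal K r :=
      Ideal.mul_mem_left _ _ Lsq_mem_relIdeal
    have := Submodule.sub_mem _ hcLmem hsub
    simpa using this

lemma ker_phiMap_small (t : ℕ) (ht : t ≤ 1) :
    LinearMap.ker (phiMap (K := K) (r := r) t) = ⊥ := by
  rw [eq_bot_iff]
  intro v hv
  rw [LinearMap.mem_ker, phiMap_apply_zero_iff] at hv
  obtain ⟨m, hm, c, hc⟩ := mem_relIdeal_decomp hv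
  have hv2 : v = piMap t (psiMap t v) := (piMap_psiMap _ _).symm
  rw [hc, map_add] at hv2
  have hz : piMap t m = 0 := by
    funext A
    rw [piMap_apply, sq_ideal_coeff_zero hm]
    rfl
  have hz2 : piMap t (c * (∑ i : Fin r, X i) ^ 2) = 0 := by
    funext A
    rw [piMap_apply, coeff_ind_mul_Lsq]
    show _ = (0 : lvl r t → K) A
    rw [Pi.zero_apply]
    apply Finset.sum_eq_zero
    intro i _
    apply Finset.sum_eq_zero
    intro j _
    rw [if_neg]
    rintro ⟨hij, hiA, hjA⟩
    have hsub : ({i, j} : Finset (Fin r)) ⊆ A.1 := by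
      intro x hx
      rcases Finset.mem_insert.mp hx with rfl | hx
      · exact hiA
      · exact (Finset.mem_singleton.mp hx) ▸ hjA
    have := Finset.card_le_card hsub
    rw [Finset.card_pair hij, A.2] at this
    omega
  rw [hz, hz2, zero_add] at hv2
  simpa using hv2

end Poly4

open MvPolynomial

/-- The Hilbert function of `R/I` in degree `t`. -/
noncomputable def hilbertFunction {K : Type*} [Field K] {r : ℕ}
    (I : Ideal (MvPolynomial (Fin r) K)) (t : ℕ) : ℕ :=
  Module.finrank K
    ((MvPolynomial.homogeneousSubmodule (Fin r) K t).map
      (Ideal.Quotient.mkₐ K I).toLinearMap)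

/-- Binomial coefficient with the convention that it vanishes for negative lower index. -/
def chooseZ (n : ℕ) (k : ℤ) : ℤ :=
  if 0 ≤ k then n.choose k.toNat else 0
section Final

open MvPolynomial Finset

theorem stmt9 (K : Type*) [Field K] [CharZero K] (q : ℕ) (r : ℕ) (hr : r = 2 * q + 1)
    (I : Ideal (MvPolynomial (Fin r) K))
    (hI : I = Ideal.span ((Set.range fun i : Fin r => (X i : MvPolynomial (Fin r) K) ^ 2) ∪
      {(∑ i : Fin r, X i) ^ 2})) :
    (∀ t : ℕ, t ≤ q → (hilbertFunction I t : ℤ) = r.choose t - chooseZ r ((t : ℤ) - 2)) ∧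
    (hilbertFunction I (q + 1) : ℤ) = r.choose q - chooseZ r ((q : ℤ) - 1) ∧
    ∀ t : ℕ, q + 1 < t → hilbertFunction I t = 0 := by
  have hIr : I = relIdeal K r := hI
  subst hIr
  have hcz_neg : ∀ k : ℤ, k < 0 → chooseZ r k = 0 := fun k hk => if_neg (by omega)
  have hcz_nat : ∀ s : ℕ, chooseZ r (s : ℤ) = r.choose s := fun s => by
    rw [chooseZ, if_pos (Int.natCast_nonneg s), Int.toNat_natCast]
  have hH : ∀ t, hilbertFunction (relIdeal K r) t +
      Module.finrank K (LinearMap.ker (phiMap (K := K) (r := r) t)) = r.choose t := by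
    intro t
    have h1 := LinearMap.finrank_range_add_finrank_ker (phiMap (K := K) (r := r) t)
    rw [Module.finrank_fintype_fun_eq_card, Fintype.card_finset_len, Fintype.card_fin] at h1
    have h2 : hilbertFunction (relIdeal K r) t =
        Module.finrank K (LinearMap.range (phiMap (K := K) (r := r) t)) := by
      rw [hilbertFunction, range_phiMap]
    rw [h2]
    exact h1
  have hker_inj : ∀ s : ℕ, s + 1 ≤ q →
      Module.finrank K (LinearMap.ker (phiMap (K := K) (r := r) (s+2))) = r.choose s := by
    intro s hs
    rw [ker_phiMap]
    have h1 : Function.Injective ((Mup K r (s+1)).mulVec) :=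
      mup_inj_K K r (s+1) (by omega)
    have h0 : Function.Injective ((Mup K r s).mulVec) := mup_inj_K K r s (by omega)
    have hinj : Function.Injective ((Mup K r (s+1) * Mup K r s).mulVecLin) := by
      intro v w hvw
      simp only [Matrix.mulVecLin_apply, ← Matrix.mulVec_mulVec] at hvw
      exact h0 (h1 hvw)
    rw [LinearMap.finrank_range_of_inj hinj, Module.finrank_fintype_fun_eq_card,
      Fintype.card_finset_len, Fintype.card_fin]
  have hker_surj : ∀ s : ℕ, q ≤ s →
      LinearMap.ker (phiMap (K := K) (r := r) (s+2)) = ⊤ := by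
    intro s hs
    rw [ker_phiMap, LinearMap.range_eq_top]
    have h1 : Function.Surjective ((Mup K r (s+1)).mulVec) :=
      mup_surj_K K r (s+1) (by omega)
    have h0 : Function.Surjective ((Mup K r s).mulVec) := mup_surj_K K r s (by omega)
    intro y
    obtain ⟨x1, hx1⟩ := h1 y
    obtain ⟨x0, hx0⟩ := h0 x1
    refine ⟨x0, ?_⟩
    rw [Matrix.mulVecLin_apply, ← Matrix.mulVec_mulVec, hx0, hx1]
  have hsmall : ∀ t : ℕ, t ≤ 1 → hilbertFunction (relIdeal K r) t = r.choose t := by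
    intro t ht
    have h := hH t
    rw [ker_phiMap_small t ht, finrank_bot, add_zero] at h
    exact h
  refine ⟨?_, ?_, ?_⟩
  · intro t ht
    match t with
    | 0 =>
      rw [hsmall 0 (by omega), hcz_neg _ (by norm_num), sub_zero]
    | 1 =>
      rw [hsmall 1 (by omega), hcz_neg _ (by norm_num), sub_zero]
    | (s+2) =>
      have h := hH (s+2)
      rw [hker_inj s (by omega)] at h
      have hcz : chooseZ r (((s+2:ℕ) : ℤ) - 2) = r.choose s := by
        rw [show ((s+2:ℕ):ℤ) - 2 = (s:ℤ) by push_cast; ring, hcz_nat]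
      rw [hcz]
      have hc := congrArg (Nat.cast : ℕ → ℤ) h
      push_cast at hc ⊢
      linarith
  · match q, hr with
    | 0, hr =>
      rw [hsmall 1 (by omega)]
      rw [hcz_neg _ (by norm_num), sub_zero, hr]
      norm_num
    | (q'+1), hr =>
      have h := hH (q'+2)
      rw [hker_inj q' (by omega)] at h
      have hsym : r.choose (q'+2) = r.choose (q'+1) := by
        have h2 := Nat.choose_symm (n := r) (k := q'+1) (by omega)
        rw [show r - (q'+1) = q'+2 by omega] at h2
        exact h2
      rw [hsym] at h
      have hcz : chooseZ r (((q'+1:ℕ) : ℤ) - 1) = r.choose q' := by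
        rw [show ((q'+1:ℕ):ℤ) - 1 = (q':ℤ) by push_cast; ring, hcz_nat]
      rw [show q' + 1 + 1 = q' + 2 from rfl, hcz]
      have hc := congrArg (Nat.cast : ℕ → ℤ) h
      push_cast at hc ⊢
      linarith
  · intro t ht
    obtain ⟨s, rfl⟩ : ∃ s, t = s + 2 := ⟨t - 2, by omega⟩
    have h := hH (s+2)
    rw [hker_surj s (by omega), finrank_top, Module.finrank_fintype_fun_eq_card,
      Fintype.card_finset_len, Fintype.card_fin] at h
    omega

end Final
end

section
/- For every integer q ≥ 4, the inequality binomial(2q+1, q) - binomial(2q+1, q-2) < 2^q + binomial(2q+1, q-1) - binomial(2q+1, q-3) holds. -/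
/-! With `n = 2q+1`, the binomial ratios `C(n, j+1) / C(n, j) = (n - j) / (j + 1)` express the
alternating sum `C(n,q) - C(n,q-1) - C(n,q-2) + C(n,q-3)` as
`-4 (q-6)(q+1) C(n,q-3) / ((q-2)(q-1)q)`, which is `≤ 0` once `q ≥ 6`; then `2^q > 0` gives the
strict inequality. The cases `q = 4, 5` are checked by computation. -/

lemma cast_choose_succ_mul_eq (n j : ℕ) (hj : j ≤ n) :
    (n.choose (j + 1) : ℤ) * (j + 1) = n.choose j * (n - j) := by
  have h := congrArg (Nat.cast : ℕ → ℤ) (Nat.choose_succ_right_eq n j)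
  push_cast [Nat.cast_sub hj] at h
  exact h

lemma choose_mid_add_choose_sub_three_le (q : ℕ) (hq : 6 ≤ q) :
    (2 * q + 1).choose q + (2 * q + 1).choose (q - 3) ≤
      (2 * q + 1).choose (q - 1) + (2 * q + 1).choose (q - 2) := by
  obtain ⟨k, rfl⟩ : ∃ k, q = k + 3 := ⟨q - 3, by omega⟩
  simp only [show k + 3 - 3 = k by omega, show k + 3 - 2 = k + 1 by omega,
    show k + 3 - 1 = k + 2 by omega]
  set n := 2 * (k + 3) + 1
  have h₁ := cast_choose_succ_mul_eq n k (by omega)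
  have h₂ := cast_choose_succ_mul_eq n (k + 1) (by omega)
  have h₃ := cast_choose_succ_mul_eq n (k + 2) (by omega)
  push_cast [n] at h₁ h₂ h₃
  set a : ℤ := (n.choose k : ℤ)
  set b : ℤ := (n.choose (k + 1) : ℤ)
  set c : ℤ := (n.choose (k + 2) : ℤ)
  set d : ℤ := (n.choose (k + 3) : ℤ)
  have identity : (c + b - (d + a)) * ((k + 1) * (k + 2) * (k + 3)) = 4 * a * (k - 3) * (k + 4) := by
    linear_combination (-2 * ((k : ℤ) + 1)) * h₂
      + ((k + 3) * (k + 6) + (k + 2) * (k + 3) - (k + 5) * (k + 6) : ℤ) * h₁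
      - ((k + 1) * (k + 2) : ℤ) * h₃
  have hk : (0 : ℤ) ≤ k - 3 := by
    rw [sub_nonneg]
    exact_mod_cast (by omega : 3 ≤ k)
  have hdiff : 0 ≤ c + b - (d + a) :=
    nonneg_of_mul_nonneg_left (by rw [identity]; positivity) (by positivity)
  zify
  linarith

theorem stmt12 (q : ℕ) (hq : 4 ≤ q) :
    ((2 * q + 1).choose q : ℤ) - (2 * q + 1).choose (q - 2) <
      2 ^ q + (2 * q + 1).choose (q - 1) - (2 * q + 1).choose (q - 3) := by
  rcases Nat.lt_or_ge q 6 with hsmall | hlarge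
  · interval_cases q <;> decide
  · have key : ((2 * q + 1).choose q : ℤ) + (2 * q + 1).choose (q - 3) ≤
        (2 * q + 1).choose (q - 1) + (2 * q + 1).choose (q - 2) := by
      exact_mod_cast choose_mid_add_choose_sub_three_le q hlarge
    have hpow : (0 : ℤ) < 2 ^ q := by positivity
    linarith
end

section
/- For every integer q ≥ 4, 2^q · (q+1) > binomial(2q+2, q) - 3·binomial(2q+2, q-2). -/
/-! For `q ≥ 6` the ratio `C(2q+2, q) / C(2q+2, q-2) = (q+4)(q+3) / (q(q-1))` is at most `3`,
so the left-hand side is not positive; the cases `q = 4, 5` are checked by computation. -/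

theorem Nat.choose_add_two_mul (n k : ℕ) :
    n.choose (k + 2) * ((k + 2) * (k + 1)) = n.choose k * ((n - k) * (n - k - 1)) := by
  have h₁ := Nat.choose_succ_right_eq n (k + 1)
  have h₀ := Nat.choose_succ_right_eq n k
  rw [Nat.sub_add_eq] at h₁
  calc n.choose (k + 2) * ((k + 2) * (k + 1))
      = n.choose (k + 1 + 1) * (k + 1 + 1) * (k + 1) := by ring
    _ = n.choose (k + 1) * (k + 1) * (n - k - 1) := by rw [h₁]; ring
    _ = n.choose k * ((n - k) * (n - k - 1)) := by rw [h₀]; ring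

theorem Nat.choose_le_three_mul_choose_sub_two {q : ℕ} (hq : 6 ≤ q) :
    (2 * q + 2).choose q ≤ 3 * (2 * q + 2).choose (q - 2) := by
  obtain ⟨k, rfl⟩ : ∃ k, q = k + 2 := ⟨q - 2, by omega⟩
  have hratio := Nat.choose_add_two_mul (2 * (k + 2) + 2) k
  rw [show 2 * (k + 2) + 2 - k = k + 6 by omega, show k + 6 - 1 = k + 5 by omega] at hratio
  rw [Nat.add_sub_cancel]
  have hfactor : (k + 6) * (k + 5) ≤ 3 * ((k + 2) * (k + 1)) := by nlinarith
  refine Nat.le_of_mul_le_mul_right (c := (k + 2) * (k + 1)) ?_ (by positivity)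
  calc (2 * (k + 2) + 2).choose (k + 2) * ((k + 2) * (k + 1))
      = (2 * (k + 2) + 2).choose k * ((k + 6) * (k + 5)) := hratio
    _ ≤ (2 * (k + 2) + 2).choose k * (3 * ((k + 2) * (k + 1))) := Nat.mul_le_mul_left _ hfactor
    _ = 3 * (2 * (k + 2) + 2).choose k * ((k + 2) * (k + 1)) := by ring

theorem stmt15 (q : ℕ) (hq : 4 ≤ q) :
    ((2 * q + 2).choose q : ℤ) - 3 * (2 * q + 2).choose (q - 2) < 2 ^ q * (q + 1) := by
  obtain rfl | rfl | hq := (by omega : q = 4 ∨ q = 5 ∨ 6 ≤ q)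
  · decide
  · decide
  · have hle : ((2 * q + 2).choose q : ℤ) ≤ 3 * (2 * q + 2).choose (q - 2) := by
      exact_mod_cast Nat.choose_le_three_mul_choose_sub_two hq
    have hpos : (0 : ℤ) < 2 ^ q * (q + 1) := by positivity
    linarith
end
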